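/- arXiv:1904.08661 — 6 statements merged into one kernel-verified Lean document; each statement's English description precedes it below -/
import Mathlib

section
/- For every integer k ≥ m ≥ 2 with k ≥ 1, there exists an m × d integer matrix A with d ≥ k+1, all entries of absolute value at most k, such that every m × m submatrix of A is nonsingular. -/
theorem stmt_1 (k m : ℕ) (hm : 2 ≤ m) (hk : m ≤ k) :
    ∃ (d : ℕ) (A : Matrix (Fin m) (Fin d) ℤ),
      k + 1 ≤ d ∧
      (∀ i j, |A i j| ≤ (k : ℤ)) ∧
      (∀ g : Fin m → Fin d, Function.Injective g → (A.submatrix id g).det ≠ 0) := by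
  obtain ⟨p, hp, hkp, hp2k⟩ := Nat.exists_prime_lt_and_le_two_mul k (by omega)
  haveI : Fact p.Prime := ⟨hp⟩
  set A : Matrix (Fin m) (Fin p) ℤ :=
    Matrix.of (fun i j => (((j : ℕ) : ZMod p) ^ (i : ℕ)).valMinAbs) with hA
  refine ⟨p, A, by omega, ?_, ?_⟩
  · intro i j
    have h1 := ZMod.natAbs_valMinAbs_le (((j : ℕ) : ZMod p) ^ (i : ℕ))
    have h2 : (A i j).natAbs ≤ p / 2 := h1
    rw [Int.abs_eq_natAbs]
    have : p / 2 ≤ k := by omega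
    exact_mod_cast le_trans h2 this
  · intro g hg h0
    have hc : ((A.submatrix id g).map (Int.cast : ℤ → ZMod p))
        = (Matrix.vandermonde (fun j : Fin m => ((g j : ℕ) : ZMod p))).transpose := by
      ext i j
      simp [hA, Matrix.vandermonde, ZMod.coe_valMinAbs]
    have hdet : (((A.submatrix id g).det : ℤ) : ZMod p) ≠ 0 := by
      rw [show (((A.submatrix id g).det : ℤ) : ZMod p)
          = ((A.submatrix id g).map (Int.cast : ℤ → ZMod p)).det from
        (RingHom.map_det (Int.castRingHom (ZMod p)) _), hc, Matrix.det_transpose]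
      rw [Matrix.det_vandermonde_ne_zero_iff]
      intro a b hab
      apply hg
      have ha : (g a : ℕ) < p := (g a).2
      have hb : (g b : ℕ) < p := (g b).2
      have := congrArg (ZMod.val) hab
      rw [ZMod.val_natCast_of_lt ha, ZMod.val_natCast_of_lt hb] at this
      exact Fin.ext this
    exact hdet (by rw [h0]; simp)
end

section
/- Let d be a prime, m ≥ 2, and suppose d ≤ k^{m/(m-1)}, i.e., d^{1-1/m} ≤ k. Then there exists an m × d integer matrix A with all entries of absolute value at most k such that the determinant of every m × m submatrix of A is not divisible by d (in particular, every m × m submatrix is nonsingular). -/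
/-- Pigeonhole (Bohr-set) lemma: for `k < d` with `d^(m-1) < (k+1)^m`, for any
vector `v` over `ZMod d` there is a nonzero multiplier `l` such that each
`l * v i` has an integer representative of absolute value at most `k`. -/
lemma aux_pigeonhole (d m k : ℕ) (hd : 0 < d) (hkd : k < d)
    (hcard : d ^ (m - 1) < (k + 1) ^ m) (v : Fin m → ZMod d) :
    ∃ (l : ZMod d) (a : Fin m → ℤ), l ≠ 0 ∧ (∀ i, |a i| ≤ (k : ℤ)) ∧
      ∀ i, ((a i : ℤ) : ZMod d) = l * v i := by
  haveI : NeZero d := ⟨hd.ne'⟩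
  have hm1 : m ≠ 0 := by rintro rfl; simp at hcard
  set φ : ZMod d × (Fin m → Fin (k + 1)) → (Fin m → ZMod d) :=
    fun p i => p.1 * v i + ((p.2 i : ℕ) : ZMod d) with hφ
  have hlt : Fintype.card (Fin m → ZMod d) <
      Fintype.card (ZMod d × (Fin m → Fin (k + 1))) := by
    simp only [Fintype.card_prod, Fintype.card_fun, ZMod.card, Fintype.card_fin]
    calc d ^ m = d ^ (m - 1) * d := by
          rw [← pow_succ]; congr 1; omega
      _ < (k + 1) ^ m * d := Nat.mul_lt_mul_of_lt_of_le hcard (le_refl d) hd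
      _ = d * (k + 1) ^ m := Nat.mul_comm _ _
  obtain ⟨p, q, hpq, heq⟩ := Fintype.exists_ne_map_eq_of_card_lt φ hlt
  have hval : ∀ i, p.1 * v i + ((p.2 i : ℕ) : ZMod d)
      = q.1 * v i + ((q.2 i : ℕ) : ZMod d) := fun i => congrFun heq i
  have hl : p.1 ≠ q.1 := by
    rintro h1
    apply hpq
    have h2 : p.2 = q.2 := by
      funext i
      have h3 : ((p.2 i : ℕ) : ZMod d) = ((q.2 i : ℕ) : ZMod d) := by
        have := hval i; rw [h1] at this; exact add_left_cancel this
      have h4 : (p.2 i : ℕ) = (q.2 i : ℕ) := by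
        have hp := (p.2 i).isLt
        have hq := (q.2 i).isLt
        have := congrArg ZMod.val h3
        rwa [ZMod.val_natCast_of_lt (lt_of_lt_of_le hp hkd),
          ZMod.val_natCast_of_lt (lt_of_lt_of_le hq hkd)] at this
      exact Fin.ext h4
    exact Prod.ext h1 h2
  refine ⟨p.1 - q.1, fun i => ((q.2 i : ℕ) : ℤ) - ((p.2 i : ℕ) : ℤ), sub_ne_zero.mpr hl,
    fun i => ?_, fun i => ?_⟩
  · rw [abs_sub_le_iff]
    constructor
    · have := (q.2 i).isLt; omega
    · have := (p.2 i).isLt; omega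
  · push_cast
    linear_combination -(hval i)

theorem stmt_2 (d m k : ℕ) (hd : d.Prime) (hm : 2 ≤ m)
    (hk : (d : ℝ) ^ (1 - 1 / (m : ℝ)) ≤ (k : ℝ)) :
    ∃ A : Matrix (Fin m) (Fin d) ℤ,
      (∀ i j, |A i j| ≤ (k : ℤ)) ∧
      (∀ g : Fin m → Fin d, Function.Injective g →
        ¬ (d : ℤ) ∣ (A.submatrix id g).det) := by
  haveI : Fact d.Prime := ⟨hd⟩
  have hd2 : 2 ≤ d := hd.two_le
  have hm0 : m ≠ 0 := by omega
  have key : ∀ j : Fin d, ∃ (l : ZMod d) (a : Fin m → ℤ), l ≠ 0 ∧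
      (∀ i, |a i| ≤ (k : ℤ)) ∧
      ∀ i, ((a i : ℤ) : ZMod d) = l * ((j : ℕ) : ZMod d) ^ (i : ℕ) := by
    intro j
    by_cases hkd : k < d
    · have hcard : d ^ (m - 1) < (k + 1) ^ m := by
        have h1 : (d : ℝ) ^ (m - 1 : ℕ) ≤ (k : ℝ) ^ m := by
          have h2 : ((d : ℝ) ^ ((1 : ℝ) - 1 / (m : ℝ))) ^ (m : ℕ)
              = (d : ℝ) ^ (m - 1 : ℕ) := by
            rw [← Real.rpow_natCast ((d : ℝ) ^ ((1 : ℝ) - 1 / (m : ℝ))) m,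
              ← Real.rpow_mul (by positivity)]
            have h3 : ((1 : ℝ) - 1 / (m : ℝ)) * (m : ℕ) = ((m - 1 : ℕ) : ℝ) := by
              have hmne : (m : ℝ) ≠ 0 := Nat.cast_ne_zero.mpr hm0
              rw [Nat.cast_sub (by omega : 1 ≤ m)]
              push_cast
              field_simp
            rw [h3, Real.rpow_natCast]
          calc (d : ℝ) ^ (m - 1 : ℕ) = ((d : ℝ) ^ ((1 : ℝ) - 1 / (m : ℝ))) ^ (m : ℕ) :=
                h2.symm
            _ ≤ (k : ℝ) ^ m := by
                apply pow_le_pow_left₀ (by positivity) hk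
        have h4 : d ^ (m - 1) ≤ k ^ m := by
          exact_mod_cast h1
        exact lt_of_le_of_lt h4 (Nat.pow_lt_pow_left (lt_add_one k) hm0)
      exact aux_pigeonhole d m k (by omega) hkd hcard
        (fun i => ((j : ℕ) : ZMod d) ^ (i : ℕ))
    · refine ⟨1, fun i => (((j : ℕ) ^ (i : ℕ) % d : ℕ) : ℤ), one_ne_zero, fun i => ?_,
        fun i => ?_⟩
      · have h5 : (j : ℕ) ^ (i : ℕ) % d < d := Nat.mod_lt _ (by omega)
        show |(((j : ℕ) ^ (i : ℕ) % d : ℕ) : ℤ)| ≤ (k : ℤ)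
        rw [abs_of_nonneg (by positivity)]
        exact_mod_cast (by omega : (j : ℕ) ^ (i : ℕ) % d ≤ k)
      · rw [Int.cast_natCast, ZMod.natCast_mod]
        push_cast
        ring
  choose l a hl ha hmod using key
  refine ⟨fun i j => a j i, fun i j => ha j i, fun g hg => ?_⟩
  intro h0
  rw [← ZMod.intCast_zmod_eq_zero_iff_dvd] at h0
  have h1 : ((Int.castRingHom (ZMod d)).mapMatrix
      ((Matrix.of fun i j => a j i).submatrix id g)).det = 0 := by
    rw [← RingHom.map_det]
    exact_mod_cast h0
  have hmat : (Int.castRingHom (ZMod d)).mapMatrix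
        ((Matrix.of fun i j => a j i).submatrix id g)
      = (Matrix.vandermonde (fun t => ((g t : ℕ) : ZMod d))).transpose
          * Matrix.diagonal (fun t => l (g t)) := by
    ext i t
    simp only [RingHom.mapMatrix_apply, Matrix.map_apply, Matrix.submatrix_apply,
      Matrix.mul_diagonal, Matrix.transpose_apply, Matrix.vandermonde, Matrix.of_apply,
      id_eq, Int.coe_castRingHom]
    rw [hmod (g t) i]
    ring
  rw [hmat, Matrix.det_mul, Matrix.det_transpose, Matrix.det_diagonal] at h1
  rcases mul_eq_zero.mp h1 with h2 | h2
  · refine Matrix.det_vandermonde_ne_zero_iff.mpr ?_ h2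
    intro t t' htt
    apply hg
    have h6 := congrArg ZMod.val htt
    rwa [ZMod.val_natCast_of_lt (g t).isLt, ZMod.val_natCast_of_lt (g t').isLt,
      ← Fin.ext_iff] at h6
  · exact Finset.prod_ne_zero_iff.mpr (fun t _ => hl (g t)) h2
end

section
/- Let k, m be positive integers with m ≥ 2 and m < d ≤ max(k+1, k^{m/(m-1)}/2). Then there exists an m × d integer matrix A with |a_{i,j}| ≤ k for all i, j, such that every m × m submatrix of A has full rank. -/
/-!
The columns of `A` are integer lifts, with entries in `[-k, k]`, of nonzero multiples of the
moment vectors `(1, x, …, x^(m-1))` modulo a prime `p ≥ d`, one for each residue `x = j`. Modulo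
`p` every `m × m` minor is then a Vandermonde determinant times a product of nonzero scalars.

If `d ≤ k + 1`, take `p ∈ (k, 2k]` and the centred residues of the powers of `x`. Otherwise take
`p ∈ (d - 1, 2(d - 1)]`; then `p^(m-1) < k^m`, so two of the `(k+1)^m` vectors with entries in
`[0, k]` agree in the `m - 1` linear conditions cutting out the line of `(1, x, …, x^(m-1))`,
and their difference is the required lift.
-/

open Matrix

theorem exists_ne_zero_abs_le_map_eq_zero {ι G : Type*} [Fintype ι] [AddCommGroup G] [Fintype G]
    (f : (ι → ℤ) →+ G) (k : ℕ)
    (h : Fintype.card G < (k + 1) ^ Fintype.card ι) :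
    ∃ v : ι → ℤ, v ≠ 0 ∧ (∀ i, |v i| ≤ k) ∧ f v = 0 := by
  classical
  obtain ⟨a, b, hab, hfab⟩ := Fintype.exists_ne_map_eq_of_card_lt
    (fun w : ι → Fin (k + 1) => f fun i => (w i : ℤ)) (by simpa using h)
  refine ⟨(fun i => (a i : ℤ)) - fun i => (b i : ℤ), fun hv => hab ?_, fun i => ?_, ?_⟩
  · funext i
    have hi := congrFun hv i
    simp only [Pi.sub_apply, Pi.zero_apply, sub_eq_zero, Nat.cast_inj] at hi
    exact Fin.ext hi
  · have ha := (a i).is_lt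
    have hb := (b i).is_lt
    simp only [Pi.sub_apply, abs_le]
    omega
  · rw [map_sub, sub_eq_zero]
    exact hfab

def ReducesToScaledPowers {m : ℕ} (p : ℕ) (x : ZMod p) (v : Fin m → ℤ) : Prop :=
  ∃ s : ZMod p, s ≠ 0 ∧ ∀ i, (v i : ZMod p) = s * x ^ (i : ℕ)

theorem exists_reducesToScaledPowers_valMinAbs {k m p : ℕ} (hp : 1 < p) (hpk : p ≤ 2 * k + 1)
    (x : ZMod p) : ∃ v : Fin m → ℤ, (∀ i, |v i| ≤ k) ∧ ReducesToScaledPowers p x v := by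
  have : Fact (1 < p) := ⟨hp⟩
  refine ⟨fun i => (x ^ (i : ℕ)).valMinAbs, fun i => ?_, 1, one_ne_zero, fun i => ?_⟩
  · have := ZMod.natAbs_valMinAbs_le (x ^ (i : ℕ))
    rw [Int.abs_eq_natAbs]
    exact_mod_cast this.trans (by omega)
  · rw [one_mul, ZMod.coe_valMinAbs]

theorem exists_reducesToScaledPowers_of_pow_lt {k n p : ℕ} [Fact p.Prime] (hkp : k < p)
    (h : p ^ n < (k + 1) ^ (n + 1)) (x : ZMod p) :
    ∃ v : Fin (n + 1) → ℤ, (∀ i, |v i| ≤ k) ∧ ReducesToScaledPowers p x v := by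
  let f : (Fin (n + 1) → ℤ) →+ (Fin n → ZMod p) := AddMonoidHom.mk'
    (fun v t => (v t.succ : ZMod p) - v 0 * x ^ (t.succ : ℕ))
    (fun v w => by funext t; simp only [Pi.add_apply, Int.cast_add]; ring)
  obtain ⟨v, hv0, hvk, hfv⟩ := exists_ne_zero_abs_le_map_eq_zero f k (by simpa [ZMod.card] using h)
  have hpow : ∀ i, (v i : ZMod p) = v 0 * x ^ (i : ℕ) := by
    refine Fin.cases (by simp) fun t => ?_
    exact sub_eq_zero.mp (congrFun hfv t)
  refine ⟨v, hvk, v 0, fun hs => hv0 (funext fun i => ?_), hpow⟩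
  have hdvd : (p : ℤ) ∣ v i := by
    rw [← ZMod.intCast_zmod_eq_zero_iff_dvd, hpow, hs, zero_mul]
  exact Int.eq_zero_of_abs_lt_dvd hdvd ((hvk i).trans_lt (by exact_mod_cast hkp))

theorem det_ne_zero_of_map_eq_vandermonde_mul_diagonal {R K : Type*} [CommRing R] [CommRing K]
    [IsDomain K] {m : ℕ} (f : R →+* K) (B : Matrix (Fin m) (Fin m) R) {x s : Fin m → K}
    (hx : Function.Injective x) (hs : ∀ j, s j ≠ 0) (hB : ∀ i j, f (B i j) = s j * x j ^ (i : ℕ)) :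
    B.det ≠ 0 := by
  have hmap : B.map f = (vandermonde x)ᵀ * diagonal s := by
    ext i j
    rw [mul_diagonal, map_apply, hB, transpose_apply, vandermonde_apply, mul_comm]
  intro hB0
  have := congrArg f hB0
  rw [RingHom.map_det, map_zero, RingHom.mapMatrix_apply, hmap, det_mul, det_transpose,
    det_diagonal] at this
  exact mul_ne_zero (det_vandermonde_ne_zero_iff.mpr hx)
    (Finset.prod_ne_zero_iff.mpr fun j _ => hs j) this

theorem exists_matrix_of_reducesToScaledPowers {k m d p : ℕ} [Fact p.Prime] (hdp : d ≤ p)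
    (hcol : ∀ x : ZMod p, ∃ v : Fin m → ℤ, (∀ i, |v i| ≤ k) ∧ ReducesToScaledPowers p x v) :
    ∃ A : Matrix (Fin m) (Fin d) ℤ,
      (∀ i j, |A i j| ≤ (k : ℤ)) ∧
      (∀ g : Fin m → Fin d, Function.Injective g → (A.submatrix id g).det ≠ 0) := by
  choose v hvk hv using hcol
  choose s hs hvs using hv
  refine ⟨of fun i j => v j i, fun i j => hvk _ i, fun g hg => ?_⟩
  have hcast : Function.Injective fun j : Fin d => (j : ZMod p) := fun j j' h => by
    rw [ZMod.natCast_eq_natCast_iff', Nat.mod_eq_of_lt (j.2.trans_le hdp),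
      Nat.mod_eq_of_lt (j'.2.trans_le hdp)] at h
    exact Fin.ext h
  exact det_ne_zero_of_map_eq_vandermonde_mul_diagonal (Int.castRingHom (ZMod p)) _
    (hcast.comp hg) (fun t => hs _) fun i t => hvs _ i

theorem pow_lt_pow_succ_of_lt_rpow {a b : ℝ} {n : ℕ} (hn : n ≠ 0) (ha : 0 ≤ a) (hb : 0 ≤ b)
    (h : a < b ^ ((n + 1 : ℝ) / n)) : a ^ n < b ^ (n + 1) :=
  calc a ^ n < (b ^ ((n + 1 : ℝ) / n)) ^ n := pow_lt_pow_left₀ h ha hn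
    _ = b ^ (n + 1) := by
      rw [← Real.rpow_natCast, ← Real.rpow_mul hb, div_mul_cancel₀ _ (by exact_mod_cast hn)]
      norm_cast

theorem stmt_3_general (k m d : ℕ) (hk : 1 ≤ k) (hm : 2 ≤ m)
    (hd : (d : ℝ) ≤ max ((k : ℝ) + 1) ((k : ℝ) ^ ((m : ℝ) / ((m : ℝ) - 1)) / 2)) :
    ∃ A : Matrix (Fin m) (Fin d) ℤ,
      (∀ i j, |A i j| ≤ (k : ℤ)) ∧
      (∀ g : Fin m → Fin d, Function.Injective g → (A.submatrix id g).det ≠ 0) := by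
  obtain ⟨n, rfl⟩ : ∃ n, m = n + 1 := ⟨m - 1, by omega⟩
  by_cases hdk : d ≤ k + 1
  · obtain ⟨p, hp, hkp, hp2k⟩ := Nat.exists_prime_lt_and_le_two_mul k (by omega)
    have := Fact.mk hp
    exact exists_matrix_of_reducesToScaledPowers (by omega)
      (exists_reducesToScaledPowers_valMinAbs hp.one_lt (by omega))
  · have hd2 : 2 * (d : ℝ) ≤ (k : ℝ) ^ ((n + 1 : ℝ) / n) := by
      have hkd : ¬ (d : ℝ) ≤ k + 1 := by exact_mod_cast hdk
      have := (le_max_iff.mp hd).resolve_left hkd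
      push_cast at this
      rw [add_sub_cancel_right] at this
      linarith
    obtain ⟨p, hp, hdp, hp2d⟩ := Nat.exists_prime_lt_and_le_two_mul (d - 1) (by omega : d - 1 ≠ 0)
    have := Fact.mk hp
    have hp2d' : (p : ℝ) < 2 * d := by exact_mod_cast (by omega : p < 2 * d)
    have hpk : (p : ℝ) ^ n < (k : ℝ) ^ (n + 1) :=
      pow_lt_pow_succ_of_lt_rpow (by omega) (by positivity) (by positivity) (hp2d'.trans_le hd2)
    refine exists_matrix_of_reducesToScaledPowers (p := p) (by omega)
      (exists_reducesToScaledPowers_of_pow_lt (by omega) ?_)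
    exact (by exact_mod_cast hpk : p ^ n < k ^ (n + 1)).trans_le (Nat.pow_le_pow_left k.le_succ _)

theorem stmt_3 (k m d : ℕ) (hk : 1 ≤ k) (hm : 2 ≤ m) (hmd : m < d)
    (hd : (d : ℝ) ≤ max ((k : ℝ) + 1) ((k : ℝ) ^ ((m : ℝ) / ((m : ℝ) - 1)) / 2)) :
    ∃ A : Matrix (Fin m) (Fin d) ℤ,
      (∀ i j, |A i j| ≤ (k : ℤ)) ∧
      (∀ g : Fin m → Fin d, Function.Injective g → (A.submatrix id g).det ≠ 0) :=
  stmt_3_general k m d hk hm hd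
end

section
/- There exists k_0 such that for all k ≥ k_0 and all m ≥ log k, if A is an m × d integer matrix with |a_{i,j}| ≤ k such that every m × m submatrix of A is nonsingular, then d ≤ 100·k·√(log k)·m. -/
open Finset


lemma pair_sq_le (ι : Type*) [Fintype ι] (F : ι → ℤ) :
    ∑ p : ι × ι, (F p.1 - F p.2)^2 ≤ 2 * (Fintype.card ι) * ∑ x, F x ^ 2 := by
  have h : ∑ p : ι × ι, (F p.1 - F p.2)^2
      = 2 * (Fintype.card ι) * ∑ x, F x ^ 2 - 2 * (∑ x, F x)^2 := by
    rw [Fintype.sum_prod_type]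
    have e1 : ∀ c : ι, ∑ c' : ι, (F c - F c')^2
        = (Fintype.card ι : ℤ) * F c ^2 - 2 * F c * ∑ x, F x + ∑ x, F x ^2 := by
      intro c
      have e0 : ∀ c' : ι, (F c - F c')^2 = F c ^2 - 2 * F c * F c' + F c' ^2 := by
        intro c'; ring
      rw [Finset.sum_congr rfl (fun c' _ => e0 c'), Finset.sum_add_distrib,
        Finset.sum_sub_distrib, Finset.sum_const, ← Finset.mul_sum]
      simp [card_univ, mul_comm]
    rw [Finset.sum_congr rfl (fun c _ => e1 c), Finset.sum_add_distrib,
      Finset.sum_sub_distrib, Finset.sum_const, ← Finset.mul_sum]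
    have e3 : ∑ x : ι, 2 * F x * (∑ y, F y) = 2 * (∑ x, F x)^2 := by
      rw [← Finset.sum_mul, ← Finset.mul_sum]; ring
    rw [e3]
    simp only [smul_eq_mul, card_univ]
    ring
  nlinarith [sq_nonneg (∑ x, F x)]

lemma mode_le {ι : Type*} [Fintype ι] [DecidableEq ι] (F : ι → ℤ) (x : ℤ) :
    #(univ.filter fun p : ι × ι => F p.1 - F p.2 = x)
      ≤ #(univ.filter fun p : ι × ι => F p.1 - F p.2 = 0) := by
  classical
  set V : Finset ℤ := univ.image F with hV
  set n : ℤ → ℕ := fun z => #(univ.filter fun c => F c = z) with hnn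
  have hn : ∀ y : ℤ, ∀ z ∈ V, #(filter (fun p : ι × ι => F p.1 - F p.2 = y) univ |>.filter
      (fun p => F p.1 = z)) = n z * n (z - y) := by
    intro y z _
    rw [Finset.filter_filter]
    have e : (univ.filter fun p : ι × ι => (F p.1 - F p.2 = y) ∧ F p.1 = z)
        = (univ.filter fun c : ι => F c = z) ×ˢ (univ.filter fun c : ι => F c = z - y) := by
      ext p
      simp only [mem_filter, mem_univ, true_and, Finset.mem_product]
      constructor
      · rintro ⟨h1, h2⟩; exact ⟨h2, by omega⟩
      · rintro ⟨h1, h2⟩; exact ⟨by omega, h1⟩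
    rw [e, Finset.card_product]
  have hcount : ∀ y : ℤ, #(univ.filter fun p : ι × ι => F p.1 - F p.2 = y)
      = ∑ z ∈ V, n z * n (z - y) := by
    intro y
    rw [Finset.card_eq_sum_card_fiberwise (f := fun p : ι × ι => F p.1) (t := V)
      (fun p _ => by simp [hV])]
    exact Finset.sum_congr rfl (fun z hz => hn y z hz)
  rw [hcount x, hcount 0]
  have key : 2 * ∑ z ∈ V, n z * n (z - x) ≤ 2 * ∑ z ∈ V, n z * n (z - 0) := by
    simp only [sub_zero]
    have h1 : 2 * ∑ z ∈ V, n z * n (z - x) ≤ ∑ z ∈ V, (n z ^2 + n (z-x) ^2) := by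
      rw [Finset.mul_sum]
      apply Finset.sum_le_sum
      intro z _
      have := two_mul_le_add_sq (n z) (n (z - x))
      nlinarith
    have h2 : ∑ z ∈ V, n (z - x) ^2 ≤ ∑ z ∈ V, n z ^2 := by
      have hinj : ∀ a ∈ V, ∀ b ∈ V, a - x = b - x → a = b := by intro a _ b _ h; omega
      have e1 : ∑ z ∈ V, n (z - x) ^2 = ∑ w ∈ V.image (fun z => z - x), n w ^2 :=
        (Finset.sum_image (f := fun w => n w ^ 2) hinj).symm
      rw [e1]
      have e2 : ∑ w ∈ V.image (fun z => z - x), n w ^2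
          = ∑ w ∈ (V.image (fun z => z - x)).filter (fun w => w ∈ V), n w ^2 := by
        rw [Finset.sum_filter_of_ne]
        intro w _ hw
        have hnw : n w ≠ 0 := by intro h; rw [h] at hw; simp at hw
        have : (univ.filter fun c => F c = w).Nonempty := by
          rw [← Finset.card_ne_zero]; exact hnw
        obtain ⟨c, hc⟩ := this
        simp only [mem_filter] at hc
        simp [hV, ← hc.2]
      rw [e2]
      exact Finset.sum_le_sum_of_subset (fun w hw => (Finset.mem_filter.mp hw).2)
    have h3 : ∑ z ∈ V, (n z ^2 + n (z-x) ^2) = ∑ z ∈ V, n z^2 + ∑ z ∈ V, n (z-x)^2 :=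
      Finset.sum_add_distrib
    have h4 : ∑ z ∈ V, n z * n z = ∑ z ∈ V, n z ^2 :=
      Finset.sum_congr rfl (fun z _ => (sq (n z)).symm ▸ (pow_two (n z)).symm)
    omega
  omega


lemma var_id : ∀ (r : ℕ) (a : Fin r → ℤ),
    4 * ∑ c : Fin r → Fin 4, (∑ i, (2 * ((c i : ℕ) : ℤ) - 3) * a i)^2
      = 20 * 4^r * ∑ i, (a i)^2 := by
  intro r
  induction r with
  | zero => intro a; simp
  | succ r ih =>
    intro a
    have hEquiv : ∑ c : Fin (r+1) → Fin 4, (∑ i, (2 * ((c i : ℕ) : ℤ) - 3) * a i)^2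
        = ∑ p : Fin 4 × (Fin r → Fin 4),
            (∑ i, (2 * (((Fin.cons p.1 p.2 : Fin (r+1) → Fin 4) i : ℕ) : ℤ) - 3) * a i)^2 := by
      exact (Fintype.sum_equiv (Fin.consEquiv (fun _ => Fin 4)) _ _ (fun p => rfl)).symm
    rw [hEquiv]
    have hsplit : ∀ p : Fin 4 × (Fin r → Fin 4),
        (∑ i, (2 * (((Fin.cons p.1 p.2 : Fin (r+1) → Fin 4) i : ℕ) : ℤ) - 3) * a i)
          = (2 * ((p.1 : ℕ) : ℤ) - 3) * a 0
            + ∑ i : Fin r, (2 * ((p.2 i : ℕ) : ℤ) - 3) * a i.succ := by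
      intro p
      rw [Fin.sum_univ_succ]
      simp [Fin.cons_zero, Fin.cons_succ]
    rw [Finset.sum_congr rfl (fun p _ => by rw [hsplit p])]
    rw [Fintype.sum_prod_type]
    have expand : ∀ (t : Fin 4) (c : Fin r → Fin 4),
        ((2 * ((t : ℕ) : ℤ) - 3) * a 0 + ∑ i : Fin r, (2 * ((c i : ℕ) : ℤ) - 3) * a i.succ)^2
        = (2 * ((t : ℕ) : ℤ) - 3)^2 * (a 0)^2
          + 2 * ((2 * ((t : ℕ) : ℤ) - 3) * a 0) * (∑ i : Fin r, (2 * ((c i : ℕ) : ℤ) - 3) * a i.succ)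
          + (∑ i : Fin r, (2 * ((c i : ℕ) : ℤ) - 3) * a i.succ)^2 := by
      intro t c; ring
    rw [Finset.sum_congr rfl (fun t _ => Finset.sum_congr rfl (fun c _ => expand t c))]
    have h1 : ∀ t : Fin 4, ∑ c : Fin r → Fin 4,
        ((2 * ((t : ℕ) : ℤ) - 3)^2 * (a 0)^2
          + 2 * ((2 * ((t : ℕ) : ℤ) - 3) * a 0) * (∑ i : Fin r, (2 * ((c i : ℕ) : ℤ) - 3) * a i.succ)
          + (∑ i : Fin r, (2 * ((c i : ℕ) : ℤ) - 3) * a i.succ)^2)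
        = 4^r * ((2 * ((t : ℕ) : ℤ) - 3)^2 * (a 0)^2)
          + 2 * ((2 * ((t : ℕ) : ℤ) - 3) * a 0) * (∑ c : Fin r → Fin 4, ∑ i : Fin r, (2 * ((c i : ℕ) : ℤ) - 3) * a i.succ)
          + ∑ c : Fin r → Fin 4, (∑ i : Fin r, (2 * ((c i : ℕ) : ℤ) - 3) * a i.succ)^2 := by
      intro t
      rw [Finset.sum_add_distrib, Finset.sum_add_distrib, Finset.sum_const, ← Finset.mul_sum]
      simp only [smul_eq_mul, card_univ, Fintype.card_fun, Fintype.card_fin]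
      ring
    rw [Finset.sum_congr rfl (fun t _ => h1 t), Finset.sum_add_distrib, Finset.sum_add_distrib,
      Finset.sum_const]
    have hW2 : ∑ t : Fin 4, 4 ^ r * ((2 * ((t:ℕ):ℤ) - 3)^2 * a 0 ^ 2)
        = 4^r * (20 * a 0 ^2) := by
      rw [Fin.sum_univ_four]
      norm_num [show ((0:Fin 4):ℕ) = 0 from rfl, show ((1:Fin 4):ℕ) = 1 from rfl,
        show ((2:Fin 4):ℕ) = 2 from rfl, show ((3:Fin 4):ℕ) = 3 from rfl]
      ring
    have hcross : ∑ t : Fin 4, 2 * ((2 * ((t:ℕ):ℤ) - 3) * a 0)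
          * (∑ c : Fin r → Fin 4, ∑ i : Fin r, (2 * ((c i : ℕ) : ℤ) - 3) * a i.succ) = 0 := by
      rw [← Finset.sum_mul]
      have hz : ∑ t : Fin 4, 2 * ((2 * ((t:ℕ):ℤ) - 3) * a 0) = 0 := by
        rw [Fin.sum_univ_four]
        norm_num [show ((0:Fin 4):ℕ) = 0 from rfl, show ((1:Fin 4):ℕ) = 1 from rfl,
          show ((2:Fin 4):ℕ) = 2 from rfl, show ((3:Fin 4):ℕ) = 3 from rfl]
      rw [hz, zero_mul]
    rw [hW2, hcross]
    simp only [smul_eq_mul, nsmul_eq_mul, card_univ, Fintype.card_fin, add_zero]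
    have ihs := ih (fun i => a i.succ)
    have hsum : ∑ i : Fin (r+1), (a i)^2 = (a 0)^2 + ∑ i : Fin r, (a i.succ)^2 :=
      Fin.sum_univ_succ _
    rw [hsum, pow_succ]
    push_cast
    linear_combination (4:ℤ) * ihs


lemma zeros_le {m d r : ℕ} (hr : r ≤ m) (A : Matrix (Fin m) (Fin d) ℤ)
    (hdet : ∀ g : Fin m → Fin d, Function.Injective g → (A.submatrix id g).det ≠ 0)
    (c c' : Fin r → Fin 4) (hcc : c ≠ c') :
    #(univ.filter fun j : Fin d =>
        (∑ i : Fin r, ((c i : ℕ) : ℤ) * A (Fin.castLE hr i) j) =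
        (∑ i : Fin r, ((c' i : ℕ) : ℤ) * A (Fin.castLE hr i) j)) ≤ m - 1 := by
  classical
  set S := univ.filter fun j : Fin d =>
      (∑ i : Fin r, ((c i : ℕ) : ℤ) * A (Fin.castLE hr i) j) =
      (∑ i : Fin r, ((c' i : ℕ) : ℤ) * A (Fin.castLE hr i) j) with hS
  by_contra hcon
  push_neg at hcon
  obtain ⟨i₀, hi₀⟩ := Function.ne_iff.mp hcc
  have hm1 : 1 ≤ m := le_trans (Nat.succ_le_of_lt (lt_of_lt_of_le i₀.pos (le_refl r))) hr
  have hmS : m ≤ #S := by omega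
  obtain ⟨t, htS, htc⟩ := Finset.exists_subset_card_eq hmS
  set g : Fin m → Fin d := fun i => ((t.orderIsoOfFin htc) i : Fin d) with hg
  have hginj : Function.Injective g := by
    intro x y hxy
    exact (t.orderIsoOfFin htc).injective (Subtype.ext hxy)
  set δ : Fin m → ℤ := fun i =>
    if h : (i : ℕ) < r then ((c ⟨i.1, h⟩ : ℕ) : ℤ) - ((c' ⟨i.1, h⟩ : ℕ) : ℤ) else 0 with hδ
  have hδ0 : δ ≠ 0 := by
    intro h0
    apply hi₀
    have h1 := congrFun h0 (Fin.castLE hr i₀)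
    simp only [hδ, Pi.zero_apply] at h1
    have hlt : ((Fin.castLE hr i₀ : Fin m) : ℕ) < r := i₀.2
    rw [dif_pos hlt] at h1
    have he : (⟨((Fin.castLE hr i₀ : Fin m) : ℕ), hlt⟩ : Fin r) = i₀ := Fin.ext rfl
    rw [he] at h1
    have h2 : ((c i₀ : ℕ) : ℤ) = ((c' i₀ : ℕ) : ℤ) := by omega
    exact Fin.ext (by exact_mod_cast h2)
  have key : ∀ j : Fin d, ∑ i' : Fin m, δ i' * A i' j
      = (∑ i : Fin r, ((c i : ℕ) : ℤ) * A (Fin.castLE hr i) j)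
        - (∑ i : Fin r, ((c' i : ℕ) : ℤ) * A (Fin.castLE hr i) j) := by
    intro j
    rw [← Finset.sum_sub_distrib]
    rw [← Finset.sum_filter_of_ne (s := univ) (f := fun i' : Fin m => δ i' * A i' j)
      (p := fun i' : Fin m => (i' : ℕ) < r) ?hvanish]
    case hvanish =>
      intro i' _ hne
      by_contra hge
      apply hne
      simp only [hδ, dif_neg hge, zero_mul]
    have himg : (univ.filter fun i' : Fin m => (i' : ℕ) < r) = univ.image (Fin.castLE hr) := by
      ext i'
      simp only [mem_filter, mem_univ, true_and, mem_image]
      constructor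
      · intro h; exact ⟨⟨i'.1, h⟩, Fin.ext rfl⟩
      · rintro ⟨i, rfl⟩; exact i.2
    rw [himg, Finset.sum_image (fun a _ b _ h => Fin.castLE_injective hr h)]
    apply Finset.sum_congr rfl
    intro i _
    have hlt : ((Fin.castLE hr i : Fin m) : ℕ) < r := i.2
    simp only [hδ, dif_pos hlt]
    have he : (⟨((Fin.castLE hr i : Fin m) : ℕ), hlt⟩ : Fin r) = i := Fin.ext rfl
    rw [he]; ring
  apply hdet g hginj
  rw [← Matrix.exists_vecMul_eq_zero_iff]
  refine ⟨δ, hδ0, ?_⟩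
  funext jj
  have hmem : g jj ∈ S := htS ((t.orderIsoOfFin htc jj).2)
  simp only [hS, mem_filter] at hmem
  have : (Matrix.vecMul δ (A.submatrix id g)) jj = ∑ i' : Fin m, δ i' * A i' (g jj) := by
    simp [Matrix.vecMul, dotProduct, Matrix.submatrix_apply]
  rw [this, key (g jj), Pi.zero_apply, sub_eq_zero]
  exact hmem.2

lemma main_count {m d k r : ℕ} (hr : r ≤ m) (hr1 : 1 ≤ r) (hk1 : 1 ≤ k)
    (A : Matrix (Fin m) (Fin d) ℤ) (hA : ∀ i j, |A i j| ≤ (k : ℤ))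
    (hdet : ∀ g : Fin m → Fin d, Function.Injective g → (A.submatrix id g).det ≠ 0)
    (hcond : 8 * Nat.sqrt (10*r*k^2 - 1) + 4 ≤ 4^r) :
    2 * d ≤ (8 * Nat.sqrt (10*r*k^2 - 1) + 4) * (m - 1) := by
  classical
  set B := Nat.sqrt (10*r*k^2 - 1) with hB
  set F : Fin d → (Fin r → Fin 4) → ℤ :=
    fun j c => ∑ i : Fin r, ((c i : ℕ) : ℤ) * A (Fin.castLE hr i) j with hF
  have hcardι : Fintype.card (Fin r → Fin 4) = 4^r := by
    simp [Fintype.card_fun]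
  have hcardP : Fintype.card ((Fin r → Fin 4) × (Fin r → Fin 4)) = 16^r := by
    rw [Fintype.card_prod, hcardι, ← mul_pow]
    norm_num
  -- per-column bound
  have percol : ∀ j : Fin d, 3 * 16^r ≤ 4 * (2*B+1) *
      #(univ.filter fun p : (Fin r → Fin 4) × (Fin r → Fin 4) => F j p.1 - F j p.2 = 0) := by
    intro j
    set a : Fin r → ℤ := fun i => A (Fin.castLE hr i) j with ha
    have ha2 : ∑ i, (a i)^2 ≤ (r : ℤ) * k^2 := by
      calc ∑ i, (a i)^2 ≤ ∑ _i : Fin r, (k:ℤ)^2 := by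
            apply Finset.sum_le_sum
            intro i _
            have := abs_le.mp (hA (Fin.castLE hr i) j)
            nlinarith [this.1, this.2]
        _ = (r : ℤ) * k^2 := by simp [mul_comm]
    -- second moment
    have hsm : 2 * ∑ p : (Fin r → Fin 4) × (Fin r → Fin 4), (F j p.1 - F j p.2)^2
        ≤ 5 * 16^r * ((r:ℤ) * k^2) := by
      set G : (Fin r → Fin 4) → ℤ := fun c => ∑ i, (2 * ((c i : ℕ) : ℤ) - 3) * a i with hG
      have hGF : ∀ c c' : Fin r → Fin 4, G c - G c' = 2 * (F j c - F j c') := by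
        intro c c'
        simp only [hG, hF, ha]
        rw [← Finset.sum_sub_distrib, ← Finset.sum_sub_distrib, Finset.mul_sum]
        apply Finset.sum_congr rfl
        intro i _; ring
      have h1 : ∑ p : (Fin r → Fin 4) × (Fin r → Fin 4), (G p.1 - G p.2)^2
          ≤ 2 * (4^r : ℤ) * ∑ c, (G c)^2 := by
        have hps := pair_sq_le (Fin r → Fin 4) G
        rw [hcardι] at hps
        push_cast at hps ⊢
        exact hps
      have h2 : 4 * ∑ c, (G c)^2 = 20 * 4^r * ∑ i, (a i)^2 := var_id r a
      have h3 : ∑ p : (Fin r → Fin 4) × (Fin r → Fin 4), (G p.1 - G p.2)^2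
          = 4 * ∑ p : (Fin r → Fin 4) × (Fin r → Fin 4), (F j p.1 - F j p.2)^2 := by
        rw [Finset.mul_sum]
        apply Finset.sum_congr rfl
        intro p _
        rw [hGF p.1 p.2]; ring
      have h4 : (0:ℤ) ≤ ∑ i, (a i)^2 := Finset.sum_nonneg (fun i _ => sq_nonneg _)
      have h5 : 20 * (4:ℤ)^r * ∑ i, (a i)^2 ≤ 20 * 4^r * ((r:ℤ) * k^2) := by
        apply mul_le_mul_of_nonneg_left ha2
        positivity
      have h6 : (4:ℤ)^r * 4^r = 16^r := by rw [← mul_pow]; norm_num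
      nlinarith [h1, h2, h3, h5]
    -- Markov
    set bad := univ.filter fun p : (Fin r → Fin 4) × (Fin r → Fin 4) =>
      ((10*r*k^2 : ℕ) : ℤ) ≤ (F j p.1 - F j p.2)^2 with hbad
    have hbadcard : 4 * #bad ≤ 16^r := by
      have hlb : (#bad : ℤ) * ((10*r*k^2 : ℕ) : ℤ) ≤
          ∑ p : (Fin r → Fin 4) × (Fin r → Fin 4), (F j p.1 - F j p.2)^2 := by
        calc (#bad : ℤ) * ((10*r*k^2 : ℕ) : ℤ)
            ≤ ∑ p ∈ bad, (F j p.1 - F j p.2)^2 := by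
              rw [← nsmul_eq_mul, ← Finset.sum_const]
              apply Finset.sum_le_sum
              intro p hp
              exact (Finset.mem_filter.mp hp).2
          _ ≤ ∑ p : (Fin r → Fin 4) × (Fin r → Fin 4), (F j p.1 - F j p.2)^2 := by
              apply Finset.sum_le_sum_of_subset_of_nonneg (Finset.subset_univ _)
              intro p _ _; exact sq_nonneg _
      have hpos : (0:ℤ) < ((10*r*k^2 : ℕ) : ℤ) := by
        have h0 : 0 < 10*r*k^2 := by nlinarith [hr1, hk1]
        exact_mod_cast h0
      have : (4 * #bad : ℤ) ≤ 16^r := by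
        have h20 : (4 * #bad : ℤ) * (5 * ((10*r*k^2 : ℕ) : ℤ)) ≤ (16:ℤ)^r * (5 * ((10*r*k^2 : ℕ) : ℤ)) := by
          push_cast at hlb hsm ⊢
          nlinarith [hlb, hsm]
        have h5pos : (0:ℤ) < 5 * ((10*r*k^2 : ℕ) : ℤ) := by linarith
        exact le_of_mul_le_mul_right h20 h5pos
      exact_mod_cast this
    set good := univ.filter fun p : (Fin r → Fin 4) × (Fin r → Fin 4) =>
      ¬ (((10*r*k^2 : ℕ) : ℤ) ≤ (F j p.1 - F j p.2)^2) with hgood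
    have huniv : #(univ : Finset ((Fin r → Fin 4) × (Fin r → Fin 4))) = 16^r := by
      rw [Finset.card_univ, hcardP]
    have hsplitcard : #bad + #good = 16^r := by
      rw [hbad, hgood, Finset.card_filter_add_card_filter_not, huniv]
    have hgoodcard : 3 * 16^r ≤ 4 * #good := by omega
    -- good pairs have small difference
    have hgoodmem : ∀ p ∈ good, F j p.1 - F j p.2 ∈ Finset.Icc (-(B:ℤ)) (B:ℤ) := by
      intro p hp
      have hlt := (Finset.mem_filter.mp hp).2
      push_neg at hlt
      have h10 : (1:ℕ) ≤ 10*r*k^2 := by nlinarith [hr1, hk1]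
      have h1 : (F j p.1 - F j p.2)^2 ≤ ((10*r*k^2 - 1 : ℕ) : ℤ) := by
        have hc : ((10*r*k^2 - 1 : ℕ) : ℤ) = ((10*r*k^2 : ℕ) : ℤ) - 1 := by
          push_cast [Nat.cast_sub h10]; ring
        omega
      set Δ := F j p.1 - F j p.2 with hΔ
      have h2 : (Δ.natAbs) * (Δ.natAbs) ≤ 10*r*k^2 - 1 := by
        have hnn := Int.natAbs_mul_self (a := Δ)
        have hsq : Δ^2 = Δ * Δ := sq Δ
        rw [hsq] at h1
        omega
      have h3 : Δ.natAbs ≤ B := Nat.le_sqrt.mpr h2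
      have h4 : |Δ| ≤ (B:ℤ) := by
        rw [Int.abs_eq_natAbs]; exact_mod_cast h3
      have h5 := abs_le.mp h4
      exact Finset.mem_Icc.mpr ⟨h5.1, h5.2⟩
    have hfib : #good = ∑ x ∈ Finset.Icc (-(B:ℤ)) (B:ℤ),
        #(good.filter fun p => F j p.1 - F j p.2 = x) :=
      Finset.card_eq_sum_card_fiberwise hgoodmem
    have hfib2 : ∀ x : ℤ, #(good.filter fun p => F j p.1 - F j p.2 = x) ≤
        #(univ.filter fun p : (Fin r → Fin 4) × (Fin r → Fin 4) => F j p.1 - F j p.2 = 0) := by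
      intro x
      calc #(good.filter fun p => F j p.1 - F j p.2 = x)
          ≤ #(univ.filter fun p : (Fin r → Fin 4) × (Fin r → Fin 4) => F j p.1 - F j p.2 = x) := by
            apply Finset.card_le_card
            intro p hp
            have := Finset.mem_filter.mp hp
            exact Finset.mem_filter.mpr ⟨Finset.mem_univ _, this.2⟩
        _ ≤ _ := mode_le (F j) x
    have hIcc : #(Finset.Icc (-(B:ℤ)) (B:ℤ)) = 2*B+1 := by
      rw [Int.card_Icc]
      omega
    calc 3 * 16^r ≤ 4 * #good := hgoodcard
      _ ≤ 4 * ((2*B+1) * #(univ.filter fun p : (Fin r → Fin 4) × (Fin r → Fin 4) =>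
            F j p.1 - F j p.2 = 0)) := by
          apply Nat.mul_le_mul_left
          rw [hfib]
          calc ∑ x ∈ Finset.Icc (-(B:ℤ)) (B:ℤ), #(good.filter fun p => F j p.1 - F j p.2 = x)
              ≤ ∑ _x ∈ Finset.Icc (-(B:ℤ)) (B:ℤ), #(univ.filter
                  fun p : (Fin r → Fin 4) × (Fin r → Fin 4) => F j p.1 - F j p.2 = 0) :=
                Finset.sum_le_sum (fun x _ => hfib2 x)
            _ = (2*B+1) * _ := by rw [Finset.sum_const, hIcc, smul_eq_mul]
      _ = 4 * (2*B+1) * #(univ.filter fun p : (Fin r → Fin 4) × (Fin r → Fin 4) =>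
            F j p.1 - F j p.2 = 0) := by ring
  -- global count
  set N0 : Fin d → ℕ := fun j => #(univ.filter fun p : (Fin r → Fin 4) × (Fin r → Fin 4) =>
    F j p.1 - F j p.2 = 0) with hN0
  have hswap : ∑ j, N0 j = ∑ p : (Fin r → Fin 4) × (Fin r → Fin 4),
      #(univ.filter fun j : Fin d => F j p.1 - F j p.2 = 0) := by
    simp only [hN0, Finset.card_filter]
    rw [Finset.sum_comm]
  have hcnt : ∀ p : (Fin r → Fin 4) × (Fin r → Fin 4), p.1 ≠ p.2 →
      #(univ.filter fun j : Fin d => F j p.1 - F j p.2 = 0) ≤ m - 1 := by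
    intro p hp
    have heq : (univ.filter fun j : Fin d => F j p.1 - F j p.2 = 0)
        = (univ.filter fun j : Fin d =>
            (∑ i : Fin r, ((p.1 i : ℕ) : ℤ) * A (Fin.castLE hr i) j) =
            (∑ i : Fin r, ((p.2 i : ℕ) : ℤ) * A (Fin.castLE hr i) j)) := by
      apply Finset.filter_congr
      intro j _
      simp only [hF, sub_eq_zero]
    rw [heq]
    exact zeros_le hr A hdet p.1 p.2 hp
  have hdiagcard : #(univ.filter fun p : (Fin r → Fin 4) × (Fin r → Fin 4) => p.1 = p.2)
      = 4^r := by
    have himg : (univ.filter fun p : (Fin r → Fin 4) × (Fin r → Fin 4) => p.1 = p.2)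
        = univ.image (fun c : Fin r → Fin 4 => (c, c)) := by
      ext p
      simp only [Finset.mem_filter, Finset.mem_univ, true_and, Finset.mem_image]
      constructor
      · intro h; exact ⟨p.1, Prod.ext rfl h⟩
      · rintro ⟨c, rfl⟩; rfl
    rw [himg, Finset.card_image_of_injective _ (fun a b h => congrArg Prod.fst h),
      Finset.card_univ, hcardι]
  have hT : ∑ p : (Fin r → Fin 4) × (Fin r → Fin 4),
      #(univ.filter fun j : Fin d => F j p.1 - F j p.2 = 0) ≤ 4^r * d + 16^r * (m-1) := by
    rw [← Finset.sum_filter_add_sum_filter_not univ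
      (fun p : (Fin r → Fin 4) × (Fin r → Fin 4) => p.1 = p.2)]
    have hpart1 : ∑ p ∈ univ.filter (fun p : (Fin r → Fin 4) × (Fin r → Fin 4) => p.1 = p.2),
        #(univ.filter fun j : Fin d => F j p.1 - F j p.2 = 0) ≤ 4^r * d := by
      calc ∑ p ∈ univ.filter (fun p : (Fin r → Fin 4) × (Fin r → Fin 4) => p.1 = p.2),
            #(univ.filter fun j : Fin d => F j p.1 - F j p.2 = 0)
          ≤ ∑ _p ∈ univ.filter (fun p : (Fin r → Fin 4) × (Fin r → Fin 4) => p.1 = p.2), d := by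
            apply Finset.sum_le_sum
            intro p _
            calc #(univ.filter fun j : Fin d => F j p.1 - F j p.2 = 0)
                ≤ #(univ : Finset (Fin d)) := Finset.card_filter_le _ _
              _ = d := by rw [Finset.card_univ, Fintype.card_fin]
        _ = 4^r * d := by rw [Finset.sum_const, hdiagcard, smul_eq_mul]
    have hpart2 : ∑ p ∈ univ.filter (fun p : (Fin r → Fin 4) × (Fin r → Fin 4) => ¬ p.1 = p.2),
        #(univ.filter fun j : Fin d => F j p.1 - F j p.2 = 0) ≤ 16^r * (m-1) := by
      calc ∑ p ∈ univ.filter (fun p : (Fin r → Fin 4) × (Fin r → Fin 4) => ¬ p.1 = p.2),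
            #(univ.filter fun j : Fin d => F j p.1 - F j p.2 = 0)
          ≤ ∑ _p ∈ univ.filter (fun p : (Fin r → Fin 4) × (Fin r → Fin 4) => ¬ p.1 = p.2),
            (m-1) := by
            apply Finset.sum_le_sum
            intro p hp
            exact hcnt p (Finset.mem_filter.mp hp).2
        _ ≤ 16^r * (m-1) := by
            rw [Finset.sum_const, smul_eq_mul]
            apply Nat.mul_le_mul_right
            calc #(univ.filter fun p : (Fin r → Fin 4) × (Fin r → Fin 4) => ¬ p.1 = p.2)
                ≤ #(univ : Finset ((Fin r → Fin 4) × (Fin r → Fin 4))) := Finset.card_filter_le _ _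
              _ = 16^r := by rw [Finset.card_univ, hcardP]
    omega
  have hmain : d * (3 * 16^r) ≤ 4*(2*B+1) * (4^r * d + 16^r * (m-1)) := by
    calc d * (3 * 16^r) = ∑ _j : Fin d, 3 * 16^r := by
          rw [Finset.sum_const, Finset.card_univ, Fintype.card_fin, smul_eq_mul]
      _ ≤ ∑ j : Fin d, 4*(2*B+1) * N0 j := Finset.sum_le_sum (fun j _ => percol j)
      _ = 4*(2*B+1) * ∑ j, N0 j := by rw [Finset.mul_sum]
      _ = 4*(2*B+1) * ∑ p : (Fin r → Fin 4) × (Fin r → Fin 4),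
            #(univ.filter fun j : Fin d => F j p.1 - F j p.2 = 0) := by rw [hswap]
      _ ≤ 4*(2*B+1) * (4^r * d + 16^r * (m-1)) := Nat.mul_le_mul_left _ hT
  -- final arithmetic
  have h16 : (16:ℕ)^r = 4^r * 4^r := by rw [← mul_pow]; norm_num
  have hstep : 4*(2*B+1) * (4^r * d) ≤ 16^r * d := by
    rw [h16]
    calc 4*(2*B+1) * (4^r * d) = (8*B+4) * (4^r * d) := by ring
      _ ≤ 4^r * (4^r * d) := Nat.mul_le_mul_right _ hcond
      _ = 4^r * 4^r * d := by ring
  have hfin : 16^r * (2 * d) ≤ 16^r * ((8*B+4) * (m-1)) := by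
    have e1 : d * (3 * 16^r) = 16^r * d + 16^r * (2*d) := by ring
    have e2 : 4*(2*B+1) * (4^r * d + 16^r * (m-1))
        = 4*(2*B+1) * (4^r * d) + 16^r * ((8*B+4) * (m-1)) := by ring
    rw [e1] at hmain
    rw [e2] at hmain
    omega
  exact Nat.le_of_mul_le_mul_left hfin (by positivity)

set_option maxRecDepth 10000 in
set_option maxHeartbeats 2000000 in
theorem stmt_11 :
    ∃ k₀ : ℕ, ∀ k : ℕ, k₀ ≤ k → ∀ m d : ℕ, Real.log k ≤ (m : ℝ) →
      ∀ A : Matrix (Fin m) (Fin d) ℤ,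
        (∀ i j, |A i j| ≤ (k : ℤ)) →
        (∀ g : Fin m → Fin d, Function.Injective g → (A.submatrix id g).det ≠ 0) →
        (d : ℝ) ≤ 100 * (k : ℝ) * Real.sqrt (Real.log k) * (m : ℝ) := by
  refine ⟨2^145, ?_⟩
  intro k hk m d hm A hA hdet
  have hk1 : 1 ≤ k := le_trans (Nat.one_le_two_pow) hk
  have hkR : (1:ℝ) ≤ (k:ℝ) := by exact_mod_cast hk1
  have hkpos : (0:ℝ) < k := by linarith
  set L := Real.log k with hL
  have hL100 : (100:ℝ) ≤ L := by
    have h1 : ((2:ℝ)^145) ≤ (k:ℝ) := by exact_mod_cast hk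
    have h2 : Real.log ((2:ℝ)^145) ≤ L := Real.log_le_log (by positivity) h1
    rw [Real.log_pow] at h2
    push_cast at h2
    have hl2 := Real.log_two_gt_d9
    nlinarith [h2, hl2]
  have hLpos : (0:ℝ) < L := by linarith
  have hm100 : (100:ℕ) ≤ m := by
    have : (100:ℝ) ≤ (m:ℝ) := le_trans hL100 hm
    exact_mod_cast this
  set r := min m (2 * ⌈L⌉₊) with hrdef
  have hr : r ≤ m := min_le_left _ _
  have hr1 : 1 ≤ r := by
    have h1 : 1 ≤ 2 * ⌈L⌉₊ := by
      have : 1 ≤ ⌈L⌉₊ := Nat.one_le_ceil_iff.mpr hLpos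
      omega
    exact le_min (by omega) h1
  have hrL : L ≤ (r:ℝ) := by
    have h1 : L ≤ (m:ℝ) := hm
    have h2 : L ≤ 2 * (⌈L⌉₊ : ℝ) := by
      have := Nat.le_ceil L
      have h0 : (0:ℝ) ≤ (⌈L⌉₊ : ℝ) := Nat.cast_nonneg _
      linarith
    rw [hrdef]
    push_cast [Nat.cast_min]
    exact le_min h1 h2
  have hr100 : (100:ℝ) ≤ (r:ℝ) := le_trans hL100 hrL
  have hrup : (r:ℝ) ≤ 2*(L+1) := by
    have h1 : r ≤ 2 * ⌈L⌉₊ := min_le_right _ _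
    have h2 : (⌈L⌉₊ : ℝ) < L + 1 := Nat.ceil_lt_add_one (le_of_lt hLpos)
    have h3 : ((2 * ⌈L⌉₊ : ℕ):ℝ) ≤ 2*(L+1) := by push_cast; linarith
    calc (r:ℝ) ≤ ((2 * ⌈L⌉₊ : ℕ):ℝ) := by exact_mod_cast h1
      _ ≤ 2*(L+1) := h3
  set B := Nat.sqrt (10*r*k^2 - 1) with hB
  -- bound on B
  have hBsq : ((B:ℝ))^2 ≤ 10*(r:ℝ)*(k:ℝ)^2 := by
    have h1 : B ^ 2 ≤ 10*r*k^2 - 1 := Nat.sqrt_le' _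
    have h2 : B ^ 2 ≤ 10*r*k^2 := le_trans h1 (Nat.sub_le _ _)
    have h3 : ((B^2 : ℕ):ℝ) ≤ ((10*r*k^2 : ℕ):ℝ) := by exact_mod_cast h2
    push_cast at h3
    nlinarith [h3]
  have hBpos : (0:ℝ) ≤ (B:ℝ) := Nat.cast_nonneg _
  have hsqrtr : (0:ℝ) ≤ Real.sqrt (r:ℝ) := Real.sqrt_nonneg _
  have hsr10 : (10:ℝ) ≤ Real.sqrt (r:ℝ) := by
    have : ((10:ℝ)) = Real.sqrt 100 := by
      rw [show (100:ℝ) = 10^2 by norm_num, Real.sqrt_sq (by norm_num)]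
    rw [this]
    exact Real.sqrt_le_sqrt hr100
  have hsqrq : Real.sqrt (r:ℝ) * Real.sqrt (r:ℝ) = (r:ℝ) :=
    Real.mul_self_sqrt (by positivity)
  have hsrle : Real.sqrt (r:ℝ) ≤ (r:ℝ)/10 := by nlinarith
  have hBle : (B:ℝ) ≤ Real.sqrt 10 * Real.sqrt (r:ℝ) * (k:ℝ) := by
    have h0 : (B:ℝ) ≤ Real.sqrt (10*(r:ℝ)*(k:ℝ)^2) :=
      (Real.le_sqrt hBpos (by positivity)).mpr hBsq
    have h1 : Real.sqrt (10*(r:ℝ)*(k:ℝ)^2) = Real.sqrt 10 * Real.sqrt (r:ℝ) * (k:ℝ) := by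
      rw [show (10*(r:ℝ)*(k:ℝ)^2) = (10*(r:ℝ))*(k:ℝ)^2 by ring,
        Real.sqrt_mul (by positivity), Real.sqrt_sq (by positivity),
        Real.sqrt_mul (by norm_num)]
    rw [h1] at h0
    exact h0
  have hs10 : Real.sqrt 10 ≤ 3.2 := by
    rw [show (3.2:ℝ) = Real.sqrt (3.2^2) from (Real.sqrt_sq (by norm_num)).symm]
    apply Real.sqrt_le_sqrt; norm_num
  -- hcond
  have hcond : 8 * B + 4 ≤ 4^r := by
    have hgoal : ((8 * B + 4 : ℕ) : ℝ) ≤ ((4^r : ℕ) : ℝ) := by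
      push_cast
      have hexp : ((4:ℝ))^r = Real.exp (r * Real.log 4) := by
        rw [← Real.log_pow, Real.exp_log (by positivity)]
      have hlog4 : (1.386:ℝ) ≤ Real.log 4 := by
        have : Real.log 4 = 2 * Real.log 2 := by
          rw [show (4:ℝ) = 2^2 by norm_num, Real.log_pow]; push_cast; ring
        have := Real.log_two_gt_d9
        nlinarith
      have hkexp : (k:ℝ) ≤ Real.exp (r:ℝ) := by
        have : (k:ℝ) = Real.exp L := (Real.exp_log hkpos).symm
        rw [this]
        exact Real.exp_le_exp.mpr hrL
      have h1 : Real.sqrt (r:ℝ) ≤ Real.exp (0.1 * r) := by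
        have ha := Real.add_one_le_exp (0.1 * r)
        linarith [hsrle, ha]
      have h2 : (26:ℝ) ≤ Real.exp (0.25 * r) := by
        have ha := Real.add_one_le_exp (0.25 * r)
        linarith [hr100, ha]
      have h3 : 8 * (B:ℝ) + 4 ≤ 26 * Real.sqrt (r:ℝ) * (k:ℝ) := by
        have e1 : 8 * (B:ℝ) ≤ 8 * (3.2 * Real.sqrt (r:ℝ) * (k:ℝ)) := by
          have : Real.sqrt 10 * Real.sqrt (r:ℝ) * (k:ℝ) ≤ 3.2 * Real.sqrt (r:ℝ) * (k:ℝ) := by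
            apply mul_le_mul_of_nonneg_right _ (by positivity)
            exact mul_le_mul_of_nonneg_right hs10 hsqrtr
          nlinarith [hBle]
        nlinarith [hsr10, hkR, hsqrtr]
      have h4 : 26 * Real.sqrt (r:ℝ) * (k:ℝ)
          ≤ Real.exp (0.25*r) * Real.exp (0.1*r) * Real.exp (r:ℝ) := by
        have e0 : (0:ℝ) ≤ (k:ℝ) := by positivity
        apply mul_le_mul _ hkexp e0 (by positivity)
        have := mul_le_mul h2 h1 hsqrtr (Real.exp_nonneg _)
        linarith
      have h5 : Real.exp (0.25*r) * Real.exp (0.1*r) * Real.exp (r:ℝ)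
          ≤ Real.exp (r * Real.log 4) := by
        rw [← Real.exp_add, ← Real.exp_add]
        apply Real.exp_le_exp.mpr
        nlinarith [hr100, hlog4]
      rw [hexp]
      linarith
    exact_mod_cast hgoal
  -- main bound
  have hmc := main_count hr hr1 hk1 A hA hdet hcond
  have hmcR : 2 * (d:ℝ) ≤ (8*(B:ℝ)+4) * (m:ℝ) := by
    have h1 : ((2*d : ℕ):ℝ) ≤ (((8*B+4)*(m-1) : ℕ):ℝ) := by exact_mod_cast hmc
    have h2 : ((m-1 : ℕ):ℝ) ≤ (m:ℝ) := by
      have : (m-1:ℕ) ≤ m := Nat.sub_le _ _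
      exact_mod_cast this
    push_cast at h1
    have h3 : (0:ℝ) ≤ 8*(B:ℝ)+4 := by positivity
    nlinarith [h1, h2, h3]
  -- final estimate
  have hsL : (0:ℝ) ≤ Real.sqrt L := Real.sqrt_nonneg _
  have hsL10 : (10:ℝ) ≤ Real.sqrt L := by
    have : ((10:ℝ)) = Real.sqrt 100 := by
      rw [show (100:ℝ) = 10^2 by norm_num, Real.sqrt_sq (by norm_num)]
    rw [this]
    exact Real.sqrt_le_sqrt hL100
  have hsLsq : Real.sqrt L * Real.sqrt L = L := Real.mul_self_sqrt (le_of_lt hLpos)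
  have hBfin : (B:ℝ) ≤ 4.5 * Real.sqrt L * (k:ℝ) := by
    have h1 : (10:ℝ)*(r:ℝ) ≤ 20.25 * L := by nlinarith [hrup, hL100]
    have h2 : ((B:ℝ))^2 ≤ 20.25 * L * (k:ℝ)^2 := by nlinarith [hBsq, hkR]
    have h3 : (0:ℝ) ≤ 4.5 * Real.sqrt L * (k:ℝ) := by positivity
    nlinarith [h2, hsLsq, hBpos, h3]
  have hmR : (0:ℝ) ≤ (m:ℝ) := Nat.cast_nonneg _
  have : (d:ℝ) ≤ (4*(B:ℝ)+2) * (m:ℝ) := by nlinarith [hmcR]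
  have hfinal : (4*(B:ℝ)+2) ≤ 20 * (k:ℝ) * Real.sqrt L := by
    have h1 : (1:ℝ) ≤ (k:ℝ) * Real.sqrt L := by nlinarith
    nlinarith [hBfin, hsL, hkR]
  calc (d:ℝ) ≤ (4*(B:ℝ)+2) * (m:ℝ) := this
    _ ≤ (20 * (k:ℝ) * Real.sqrt L) * (m:ℝ) := mul_le_mul_of_nonneg_right hfinal hmR
    _ ≤ 100 * (k:ℝ) * Real.sqrt L * (m:ℝ) := by nlinarith [hsL10, hkR, hmR, hsL]
end

section
/- Let s ≤ m/2 and let A be an m × d integer matrix such that Az ≠ 0 for every nonzero integer vector z with at most m nonzero entries. Let x ∈ ℤ^d be s-sparse and b = Ax + e with ‖e‖_∞ < 1/2. If y ∈ ℤ^d is any s-sparse vector minimizing ‖b − Ay‖_∞ over s-sparse integer vectors, then y = x. -/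
theorem stmt_17 (m d s : ℕ) (hs : 2 * s ≤ m)
    (A : Matrix (Fin m) (Fin d) ℤ)
    (hA : ∀ z : Fin d → ℤ, z ≠ 0 →
      (Finset.univ.filter (fun j => z j ≠ 0)).card ≤ m → A.mulVec z ≠ 0)
    (x : Fin d → ℤ) (hx : (Finset.univ.filter (fun j => x j ≠ 0)).card ≤ s)
    (e : Fin m → ℝ) (he : ∀ i, |e i| < 1 / 2)
    (b : Fin m → ℝ) (hb : ∀ i, b i = (A.mulVec x i : ℝ) + e i)
    (y : Fin d → ℤ) (hy : (Finset.univ.filter (fun j => y j ≠ 0)).card ≤ s)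
    (hmin : ∀ y' : Fin d → ℤ, (Finset.univ.filter (fun j => y' j ≠ 0)).card ≤ s →
      (⨆ i, |b i - (A.mulVec y i : ℝ)|) ≤ ⨆ i, |b i - (A.mulVec y' i : ℝ)|) :
    y = x := by
  by_contra hne
  set z : Fin d → ℤ := y - x with hz
  have hzne : z ≠ 0 := sub_ne_zero.mpr hne
  -- support bound
  have hsupp : (Finset.univ.filter (fun j => z j ≠ 0)).card ≤ m := by
    have hsub : (Finset.univ.filter (fun j => z j ≠ 0)) ⊆
        (Finset.univ.filter (fun j => y j ≠ 0)) ∪ (Finset.univ.filter (fun j => x j ≠ 0)) := by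
      intro j hj
      simp only [Finset.mem_filter, Finset.mem_union, Finset.mem_univ, true_and] at *
      by_contra h
      push_neg at h
      exact hj (by show y j - x j = 0; rw [h.1, h.2]; ring)
    calc (Finset.univ.filter (fun j => z j ≠ 0)).card
        ≤ ((Finset.univ.filter (fun j => y j ≠ 0)) ∪ (Finset.univ.filter (fun j => x j ≠ 0))).card :=
          Finset.card_le_card hsub
      _ ≤ _ + _ := Finset.card_union_le _ _
      _ ≤ s + s := add_le_add hy hx
      _ ≤ m := by omega
  have hAz := hA z hzne hsupp
  apply hAz
  have hm : 0 < m := by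
    rcases Nat.eq_zero_or_pos m with h0 | h
    · exfalso
      apply hzne
      have hs0 : s = 0 := by omega
      funext j
      have hxj : x j = 0 := by
        by_contra hxj
        have : j ∈ Finset.univ.filter (fun j => x j ≠ 0) := by simp [hxj]
        have := Finset.card_pos.mpr ⟨j, this⟩
        omega
      have hyj : y j = 0 := by
        by_contra hyj
        have : j ∈ Finset.univ.filter (fun j => y j ≠ 0) := by simp [hyj]
        have := Finset.card_pos.mpr ⟨j, this⟩
        omega
      simp [hz, hxj, hyj]
    · exact h
  haveI : Nonempty (Fin m) := ⟨⟨0, hm⟩⟩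
  -- residual bound
  have hx_res : (⨆ i, |b i - (A.mulVec x i : ℝ)|) < 1 / 2 := by
    obtain ⟨i0, hi0⟩ := exists_eq_ciSup_of_finite (f := fun i => |b i - (A.mulVec x i : ℝ)|)
    rw [← hi0, hb i0]
    simpa using he i0
  have hy_res : ∀ i, |b i - (A.mulVec y i : ℝ)| < 1 / 2 := by
    intro i
    calc |b i - (A.mulVec y i : ℝ)| ≤ ⨆ i, |b i - (A.mulVec y i : ℝ)| :=
          le_ciSup (f := fun i => |b i - (A.mulVec y i : ℝ)|) (Set.Finite.bddAbove (Set.finite_range _)) i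
      _ ≤ ⨆ i, |b i - (A.mulVec x i : ℝ)| := hmin x hx
      _ < 1 / 2 := hx_res
  funext i
  have key : |((A.mulVec y i : ℤ) : ℝ) - ((A.mulVec x i : ℤ) : ℝ)| < 1 := by
    calc |((A.mulVec y i : ℤ) : ℝ) - ((A.mulVec x i : ℤ) : ℝ)|
        = |((A.mulVec y i : ℤ) : ℝ) - b i + (b i - ((A.mulVec x i : ℤ) : ℝ))| := by ring_nf
      _ ≤ |((A.mulVec y i : ℤ) : ℝ) - b i| + |b i - ((A.mulVec x i : ℤ) : ℝ)| := abs_add_le _ _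
      _ = |b i - ((A.mulVec y i : ℤ) : ℝ)| + |b i - ((A.mulVec x i : ℤ) : ℝ)| := by
          rw [abs_sub_comm]
      _ < 1 / 2 + 1 / 2 := by
          apply add_lt_add (hy_res i)
          rw [hb i]; simpa using he i
      _ = 1 := by norm_num
  have hzero : A.mulVec y i - A.mulVec x i = 0 := by
    have : |((A.mulVec y i - A.mulVec x i : ℤ) : ℝ)| < 1 := by push_cast; exact key
    by_contra hn
    have h1 : (1 : ℤ) ≤ |A.mulVec y i - A.mulVec x i| := Int.one_le_abs hn
    have : (1 : ℝ) ≤ |((A.mulVec y i - A.mulVec x i : ℤ) : ℝ)| := by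
      rw [← Int.cast_abs]; exact_mod_cast h1
    linarith
  have : A.mulVec z i = A.mulVec y i - A.mulVec x i := by
    rw [hz, Matrix.mulVec_sub]; rfl
  rw [this, hzero]; rfl
end

section
/- Let Λ, t, m, d, k be positive integers and v_1,…,v_t ∈ ℤ^d with entries bounded by k in absolute value. Suppose that for each coordinate j there is an integer interval I_j containing at most L integer points such that at least (3/4)(Λ+1)^t of the vectors λ ∈ {0,…,Λ}^t satisfy (Σ λ_i v_i)_j ∈ I_j, and suppose d·((9/16)(Λ+1)^{2t}/L − (Λ+1)^t) ≥ m·(Λ+1)^{2t}. Then there exist λ ≠ λ' in {0,…,Λ}^t such that Σ λ_i v_i and Σ λ'_i v_i agree on at least m coordinates. -/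
/-!
Write N = (Λ+1)^t and count the ordered pairs (λ, λ') whose combinations agree in coordinate j.
Grouping the λ with value in I_j by that value and applying Cauchy–Schwarz over the at most L
values gives at least (3N/4)² / L such pairs. Summing over j, the N diagonal pairs account for
at most dN of the total, so if every off-diagonal pair agreed in fewer than m coordinates the
total would be below mN² + dN, contradicting the counting hypothesis.
-/

open Finset

variable {α β ι : Type*} [Fintype α] [DecidableEq β]

def collisionPairs (f : α → β) : Finset (α × α) := {p | f p.1 = f p.2}

theorem sq_card_fiber_eq_card_filter_collisionPairs (f : α → β) (s : β) :
    #{x | f x = s} ^ 2 = #{p ∈ collisionPairs f | f p.1 = s} := by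
  rw [sq, ← card_product]
  congr 1
  ext ⟨x, y⟩
  simp only [collisionPairs, mem_product, mem_filter, mem_univ, true_and]
  constructor
  · rintro ⟨hx, hy⟩; exact ⟨hx.trans hy.symm, hx⟩
  · rintro ⟨hxy, hx⟩; exact ⟨hx, hxy ▸ hx⟩

theorem sq_card_preimage_le_card_mul_card_collisionPairs (f : α → β) (I : Finset β) :
    #{x | f x ∈ I} ^ 2 ≤ #I * #(collisionPairs f) :=
  calc #{x | f x ∈ I} ^ 2 = (∑ s ∈ I, #{x | f x = s}) ^ 2 := by
        rw [sum_card_fiberwise_eq_card_filter]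
    _ ≤ #I * ∑ s ∈ I, #{x | f x = s} ^ 2 := sq_sum_le_card_mul_sum_sq
    _ = #I * #{p ∈ collisionPairs f | f p.1 ∈ I} := by
        simp only [sq_card_fiber_eq_card_filter_collisionPairs, sum_card_fiberwise_eq_card_filter]
    _ ≤ #I * #(collisionPairs f) := by gcongr; exact filter_subset _ _

theorem div_le_card_collisionPairs (f : α → β) (I : Finset β) {c L : ℝ} (hc : 0 ≤ c)
    (hcI : c ≤ #{x | f x ∈ I}) (hIL : #I ≤ L) :
    c ^ 2 / L ≤ #(collisionPairs f) := by
  refine div_le_of_le_mul₀ ((Nat.cast_nonneg _).trans hIL) (Nat.cast_nonneg _) ?_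
  calc c ^ 2 ≤ (#{x | f x ∈ I} : ℝ) ^ 2 := by gcongr
    _ ≤ (#I : ℝ) * #(collisionPairs f) := by
        exact_mod_cast sq_card_preimage_le_card_mul_card_collisionPairs f I
    _ ≤ #(collisionPairs f) * L := by rw [mul_comm]; gcongr

theorem exists_ne_le_card_agree_of_le_sum_card_collisionPairs [Fintype ι] [Nonempty α]
    [DecidableEq α] (f : ι → α → β) {m : ℕ} (hm : 1 ≤ m)
    (h : m * Fintype.card α ^ 2 + Fintype.card ι * Fintype.card α ≤
      ∑ j, #(collisionPairs (f j))) :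
    ∃ x y, x ≠ y ∧ m ≤ #{j | f j x = f j y} := by
  by_contra! hlt
  have hswap : ∑ j, #(collisionPairs (f j)) = ∑ p : α × α, #{j | f j p.1 = f j p.2} := by
    simp only [collisionPairs, card_filter]
    exact sum_comm
  have hpair : ∀ p : α × α,
      #{j | f j p.1 = f j p.2} ≤ (if p.1 = p.2 then Fintype.card ι else 0) + (m - 1) := by
    rintro ⟨x, y⟩
    by_cases hxy : x = y
    · simp [hxy]
    · simpa [hxy] using Nat.le_sub_one_of_lt (hlt x y hxy)
  have hsum : ∑ p : α × α, ((if p.1 = p.2 then Fintype.card ι else 0) + (m - 1)) =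
      Fintype.card ι * Fintype.card α + (m - 1) * Fintype.card α ^ 2 := by
    simp [sum_add_distrib, Fintype.sum_prod_type, sq, mul_comm]
  have hm' : (m - 1) * Fintype.card α ^ 2 < m * Fintype.card α ^ 2 :=
    Nat.mul_lt_mul_of_pos_right (by omega) (by positivity)
  have := (sum_le_sum fun p _ => hpair p).trans_eq hsum
  omega

theorem stmt_19_general (t d m Λ L : ℕ) (hm : 1 ≤ m)
    (v : Fin t → Fin d → ℤ)
    (hI : ∀ j : Fin d, ∃ a b : ℤ, (Finset.Icc a b).card ≤ L ∧
      (3 / 4 : ℝ) * ((Λ + 1 : ℝ)) ^ t ≤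
        ((Finset.univ.filter (fun lam : Fin t → Fin (Λ + 1) =>
          ∑ i, (lam i : ℤ) * v i j ∈ Finset.Icc a b)).card : ℝ))
    (hcount : (m : ℝ) * ((Λ + 1 : ℝ)) ^ (2 * t) ≤
      (d : ℝ) * ((9 / 16 : ℝ) * ((Λ + 1 : ℝ)) ^ (2 * t) / (L : ℝ) - ((Λ + 1 : ℝ)) ^ t)) :
    ∃ lam lam' : Fin t → Fin (Λ + 1), lam ≠ lam' ∧
      m ≤ (Finset.univ.filter (fun j : Fin d =>
        ∑ i, (lam i : ℤ) * v i j = ∑ i, (lam' i : ℤ) * v i j)).card := by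
  set f : Fin d → (Fin t → Fin (Λ + 1)) → ℤ := fun j lam => ∑ i, (lam i : ℤ) * v i j
  have hcoord (j : Fin d) :
      (9 / 16 : ℝ) * (Λ + 1 : ℝ) ^ (2 * t) / L ≤ #(collisionPairs (f j)) := by
    obtain ⟨a, b, hL, hfrac⟩ := hI j
    convert div_le_card_collisionPairs (f j) (Icc a b) (by positivity) hfrac
      (Nat.cast_le.mpr hL) using 2
    ring
  refine exists_ne_le_card_agree_of_le_sum_card_collisionPairs f hm ?_
  have hsum := card_nsmul_le_sum univ _ _ fun j _ => hcoord j
  simp only [card_univ, Fintype.card_fin, nsmul_eq_mul] at hsum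
  have hN : (Fintype.card (Fin t → Fin (Λ + 1)) : ℝ) = (Λ + 1 : ℝ) ^ t := by simp
  rw [Fintype.card_fin, ← Nat.cast_le (α := ℝ)]
  push_cast [hN]
  rw [← pow_mul']
  linarith

theorem stmt_19 (t d m Λ k L : ℕ) (ht : 1 ≤ t) (hm : 1 ≤ m) (hΛ : 1 ≤ Λ) (hk : 1 ≤ k)
    (v : Fin t → Fin d → ℤ) (hv : ∀ i j, |v i j| ≤ (k : ℤ))
    (hI : ∀ j : Fin d, ∃ a b : ℤ, (Finset.Icc a b).card ≤ L ∧
      (3 / 4 : ℝ) * ((Λ + 1 : ℝ)) ^ t ≤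
        ((Finset.univ.filter (fun lam : Fin t → Fin (Λ + 1) =>
          ∑ i, (lam i : ℤ) * v i j ∈ Finset.Icc a b)).card : ℝ))
    (hcount : (m : ℝ) * ((Λ + 1 : ℝ)) ^ (2 * t) ≤
      (d : ℝ) * ((9 / 16 : ℝ) * ((Λ + 1 : ℝ)) ^ (2 * t) / (L : ℝ) - ((Λ + 1 : ℝ)) ^ t)) :
    ∃ lam lam' : Fin t → Fin (Λ + 1), lam ≠ lam' ∧
      m ≤ (Finset.univ.filter (fun j : Fin d =>
        ∑ i, (lam i : ℤ) * v i j = ∑ i, (lam' i : ℤ) * v i j)).card :=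
  stmt_19_general t d m Λ L hm v hI hcount
end
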